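/- arXiv:1402.5096 — 2 statements merged into one kernel-verified Lean document; each statement's English description precedes it below -/
import Mathlib

section
/- Let Q be a quiver and θ ∈ ℤ^{Q0} a weight. For every integer k ≥ 1, the set of lattice points of ∇(Q,kθ) equals the k-fold Minkowski sum of the set of lattice points of ∇(Q,θ): ∇(Q,kθ) ∩ ℤ^{Q1} = {m_1 + ⋯ + m_k : m_1,…,m_k ∈ ∇(Q,θ) ∩ ℤ^{Q1}}. (This is the normality of the lattice polyhedron ∇(Q,θ).) -/
/-- The flow map of a quiver with arrow set `A`, vertex set `V`, source map `s`
and target map `t`. -/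
def flowMap {V A : Type} [Fintype A] [DecidableEq V] (s t : A → V) (x : A → ℝ) (v : V) : ℝ :=
  (∑ a : A, if t a = v then x a else 0) - (∑ a : A, if s a = v then x a else 0)

/-- The quiver polyhedron `∇(Q,θ)`. -/
def quiverPolyhedron {V A : Type} [Fintype A] [DecidableEq V] (s t : A → V) (θ : V → ℤ) :
    Set (A → ℝ) :=
  {x | (∀ a, 0 ≤ x a) ∧ ∀ v, flowMap s t x v = (θ v : ℝ)}

/-- A point of `ℝ^A` is a lattice point if all its coordinates are integers. -/
def IsLatticePt {A : Type} (x : A → ℝ) : Prop := ∀ a, ∃ z : ℤ, x a = (z : ℝ)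

/-- Integral-affine equivalence of lattice polyhedra. -/
def IntegralAffinelyEquivalent {A B : Type}
    (P : Set (A → ℝ)) (Q : Set (B → ℝ)) : Prop :=
  ∃ (φ : (A → ℝ) →ᵃ[ℝ] (B → ℝ)) (ψ : (B → ℝ) →ᵃ[ℝ] (A → ℝ)),
    (∀ x ∈ affineSpan ℝ P, ψ (φ x) = x) ∧
    (∀ y ∈ affineSpan ℝ Q, φ (ψ y) = y) ∧
    φ '' (affineSpan ℝ P : Set (A → ℝ)) = (affineSpan ℝ Q : Set (B → ℝ)) ∧
    φ '' ((affineSpan ℝ P : Set (A → ℝ)) ∩ {x | IsLatticePt x}) =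
      (affineSpan ℝ Q : Set (B → ℝ)) ∩ {y | IsLatticePt y} ∧
    φ '' P = Q

/-- The quiver has an oriented cycle. -/
def HasOrientedCycle {V A : Type} (s t : A → V) : Prop :=
  ∃ (n : ℕ) (f : Fin (n + 1) → A), ∀ i : Fin (n + 1), t (f i) = s (f (i + 1))

/-- The arrow `a` is removable for `(Q,θ)`. -/
def Removable {V A : Type} [Fintype A] [DecidableEq V] [DecidableEq A]
    (s t : A → V) (θ : V → ℤ) (a : A) : Prop :=
  IntegralAffinelyEquivalent (quiverPolyhedron s t θ)
    (quiverPolyhedron (fun b : {b : A // b ≠ a} => s b.1) (fun b => t b.1) θ)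

/-- The non-loop arrow `a` is contractable for `(Q,θ)`. -/
def Contractable {V A : Type} [Fintype A] [DecidableEq V] [DecidableEq A]
    (s t : A → V) (θ : V → ℤ) (a : A) (h : s a ≠ t a) : Prop :=
  IntegralAffinelyEquivalent (quiverPolyhedron s t θ)
    (quiverPolyhedron
      (fun b : {b : A // b ≠ a} =>
        if hb : s b.1 = s a then (⟨t a, Ne.symm h⟩ : {v : V // v ≠ s a}) else ⟨s b.1, hb⟩)
      (fun b : {b : A // b ≠ a} =>
        if hb : t b.1 = s a then (⟨t a, Ne.symm h⟩ : {v : V // v ≠ s a}) else ⟨t b.1, hb⟩)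
      (fun v : {v : V // v ≠ s a} => if v.1 = t a then θ (s a) + θ (t a) else θ v.1))

/-- The pair `(Q,θ)` is tight. -/
def Tight {V A : Type} [Fintype A] [DecidableEq V] [DecidableEq A]
    (s t : A → V) (θ : V → ℤ) : Prop :=
  (quiverPolyhedron s t θ).Nonempty ∧
  (∀ a : A, ¬ Removable s t θ a) ∧
  ∀ (a : A) (h : s a ≠ t a), ¬ Contractable s t θ a h

set_option linter.unusedSectionVars false
open Finset in
section
variable {V A : Type} [Fintype V] [Fintype A] [DecidableEq V] [DecidableEq A]

lemma qp_sum_ite {f : A → V} (v : V) (x y : A → ℝ) :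
    ∑ a, (if f a = v then x a + y a else 0)
      = (∑ a, if f a = v then x a else 0) + ∑ a, (if f a = v then y a else 0) := by
  rw [← Finset.sum_add_distrib]
  exact Finset.sum_congr rfl fun a _ => by split_ifs <;> simp

lemma flowMap_add (s t : A → V) (x y : A → ℝ) (v : V) :
    flowMap s t (x + y) v = flowMap s t x v + flowMap s t y v := by
  simp only [flowMap, Pi.add_apply, qp_sum_ite]; ring

lemma flowMap_zero (s t : A → V) (v : V) : flowMap s t (0 : A → ℝ) v = 0 := by
  simp [flowMap]

lemma flowMap_sum {ι : Type*} (s t : A → V) (u : Finset ι) (f : ι → (A → ℝ)) (v : V) :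
    flowMap s t (∑ i ∈ u, f i) v = ∑ i ∈ u, flowMap s t (f i) v := by
  induction u using Finset.cons_induction with
  | empty => simp [flowMap_zero]
  | cons i u hi ih => simp [Finset.sum_cons, flowMap_add, ih]

lemma qp_single_sum (f : A → V) (a : A) (r : ℝ) (v : V) :
    ∑ b, (if f b = v then Pi.single a r b else 0) = if f a = v then r else 0 := by
  rw [Finset.sum_congr rfl (fun b _ => show _ = if b = a then (if f b = v then r else 0) else 0
    from by by_cases hb : b = a <;> simp [Pi.single_apply, hb])]
  simp [Finset.sum_ite_eq']

lemma flowMap_single (s t : A → V) (a : A) (r : ℝ) (v : V) :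
    flowMap s t (Pi.single a r) v
      = (if t a = v then r else 0) - (if s a = v then r else 0) := by
  simp only [flowMap, qp_single_sum]

lemma flowMap_int (s t : A → V) (x : A → ℝ) (hx : IsLatticePt x) (v : V) :
    ∃ q : ℤ, flowMap s t x v = (q : ℝ) := by
  refine ⟨(∑ a, if t a = v then (hx a).choose else 0) - ∑ a, (if s a = v then (hx a).choose else 0), ?_⟩
  push_cast
  simp only [flowMap]
  congr 1 <;> exact Finset.sum_congr rfl fun a _ => by
    split_ifs
    · exact (hx a).choose_spec
    · simp

end

def qtl {V A : Type} (s t : A → V) (a : A) (d : Bool) : V := if d then s a else t a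
def qhd {V A : Type} (s t : A → V) (a : A) (d : Bool) : V := if d then t a else s a

section
set_option linter.unusedSectionVars false
set_option maxHeartbeats 1000000
variable {V A : Type} [Fintype V] [Fintype A] [DecidableEq V] [DecidableEq A]

lemma qp_endpoints (s t : A → V) (a : A) (d : Bool) :
    (qtl s t a d = s a ∧ qhd s t a d = t a) ∨ (qtl s t a d = t a ∧ qhd s t a d = s a) := by
  cases d <;> simp [qtl, qhd]

open Classical in
lemma qp_cycle_exists (s t : A → V) (S : Finset A) (hS : S.Nonempty)
    (hnl : ∀ a ∈ S, s a ≠ t a)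
    (hdeg : ∀ a ∈ S, ∀ v : V, (v = s a ∨ v = t a) →
      ∃ b ∈ S, b ≠ a ∧ (s b = v ∨ t b = v)) :
    ∃ (n : ℕ) (e : Fin (n+1) → A) (dd : Fin (n+1) → Bool),
      Function.Injective e ∧ (∀ i, e i ∈ S) ∧
      ∀ i, qhd s t (e i) (dd i) = qtl s t (e (i+1)) (dd (i+1)) := by
  obtain ⟨a, ha⟩ := hS
  have hna := hnl a ha
  set good : ℕ → Prop := fun m =>
    1 ≤ m ∧ ∃ (w : Fin (m+1) → V) (p : Fin m → A) (d : Fin m → Bool),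
      Function.Injective w ∧ (∀ i, p i ∈ S) ∧
      ∀ (i : ℕ) (h : i < m),
        qtl s t (p ⟨i, h⟩) (d ⟨i, h⟩) = w ⟨i, by omega⟩ ∧
        qhd s t (p ⟨i, h⟩) (d ⟨i, h⟩) = w ⟨i+1, by omega⟩ with hgood_def
  have good1 : good 1 := by
    refine ⟨le_refl 1, fun i => if (i : ℕ) = 0 then s a else t a, fun _ => a, fun _ => true,
      ?_, fun _ => ha, ?_⟩
    · intro i j hij
      apply Fin.ext
      by_cases hi : (i : ℕ) = 0 <;> by_cases hj : (j : ℕ) = 0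
      · omega
      · simp [hi, hj] at hij; exact absurd hij hna
      · simp [hi, hj] at hij; exact absurd hij.symm hna
      · have := i.isLt; have := j.isLt; omega
    · intro i h
      interval_cases i
      simp [qtl, qhd]
  have hbound : ∀ m, good m → m + 1 ≤ Fintype.card V := by
    intro m ⟨_, w, _, _, hw, _⟩
    simpa using Fintype.card_le_of_injective w hw
  set M := Nat.findGreatest good (Fintype.card V) with hM
  have h1card : 1 ≤ Fintype.card V := by have := hbound 1 good1; omega
  have hgoodM : good M := Nat.findGreatest_spec h1card good1
  have hmax : ∀ m, M < m → m ≤ Fintype.card V → ¬ good m := fun m h1 h2 =>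
    Nat.findGreatest_is_greatest h1 h2
  clear_value M
  obtain ⟨hM1, w, p, d, hw, hpS, hpc⟩ := hgoodM
  have hw' : ∀ (i j : ℕ) (hi : i < M+1) (hj : j < M+1), w ⟨i, hi⟩ = w ⟨j, hj⟩ → i = j := by
    intro i j hi hj hij
    have := hw hij
    simpa using congrArg Fin.val this
  have hpair : ∀ (i : ℕ) (h : i < M),
      (w ⟨i, by omega⟩ = s (p ⟨i, h⟩) ∧ w ⟨i+1, by omega⟩ = t (p ⟨i, h⟩)) ∨
      (w ⟨i, by omega⟩ = t (p ⟨i, h⟩) ∧ w ⟨i+1, by omega⟩ = s (p ⟨i, h⟩)) := by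
    intro i h
    rcases qp_endpoints s t (p ⟨i, h⟩) (d ⟨i, h⟩) with ⟨h1, h2⟩ | ⟨h1, h2⟩
    · exact Or.inl ⟨(hpc i h).1.symm.trans h1, (hpc i h).2.symm.trans h2⟩
    · exact Or.inr ⟨(hpc i h).1.symm.trans h1, (hpc i h).2.symm.trans h2⟩
  have hp_inj : ∀ (i j : ℕ) (hi : i < M) (hj : j < M), p ⟨i, hi⟩ = p ⟨j, hj⟩ → i = j := by
    intro i j hi hj hpij
    rcases hpair i hi with ⟨h1, h2⟩ | ⟨h1, h2⟩ <;> rcases hpair j hj with ⟨g1, g2⟩ | ⟨g1, g2⟩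
    · exact hw' _ _ _ _ (h1.trans ((congrArg s hpij).trans g1.symm))
    · have e1 := hw' _ _ _ _ (h1.trans ((congrArg s hpij).trans g2.symm))
      have e2 := hw' _ _ _ _ (h2.trans ((congrArg t hpij).trans g1.symm))
      omega
    · have e1 := hw' _ _ _ _ (h1.trans ((congrArg t hpij).trans g2.symm))
      have e2 := hw' _ _ _ _ (h2.trans ((congrArg s hpij).trans g1.symm))
      omega
    · exact hw' _ _ _ _ (h1.trans ((congrArg t hpij).trans g1.symm))
  have hM1' : M - 1 < M := by omega
  set a₀ := p ⟨M-1, hM1'⟩ with ha₀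
  have hlast : qhd s t a₀ (d ⟨M-1, hM1'⟩) = w ⟨M, by omega⟩ := by
    have := (hpc (M-1) hM1').2
    convert this using 3 <;> omega
  set v := w ⟨M, by omega⟩ with hv
  have hva₀ : v = s a₀ ∨ v = t a₀ := by
    rcases qp_endpoints s t a₀ (d ⟨M-1, hM1'⟩) with ⟨h1, h2⟩ | ⟨h1, h2⟩
    · right; rw [← h2, hlast]
    · left; rw [← h2, hlast]
  obtain ⟨b, hbS, hba, hbv⟩ := hdeg a₀ (hpS _) v hva₀
  have hnb := hnl b hbS
  obtain ⟨db, htlb⟩ : ∃ db : Bool, qtl s t b db = v := by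
    rcases hbv with h | h
    · exact ⟨true, by simpa [qtl] using h⟩
    · exact ⟨false, by simpa [qtl] using h⟩
  set u := qhd s t b db with hu
  have hbpair : (v = s b ∧ u = t b) ∨ (v = t b ∧ u = s b) := by
    rcases qp_endpoints s t b db with ⟨h1, h2⟩ | ⟨h1, h2⟩
    · exact Or.inl ⟨htlb.symm.trans h1, hu.trans h2⟩
    · exact Or.inr ⟨htlb.symm.trans h1, hu.trans h2⟩
  have huv : u ≠ v := by
    rcases hbpair with ⟨h1, h2⟩ | ⟨h1, h2⟩ <;> rw [h1, h2] <;>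
      [exact fun h => hnb h.symm; exact hnb]
  clear_value v u a₀
  by_cases humem : ∃ (j : ℕ) (hj : j < M + 1), w ⟨j, hj⟩ = u
  · -- u is on the path : extract a cycle
    obtain ⟨J, hJ1, hwJ⟩ := humem
    have hJM : J ≠ M := fun h => huv (hwJ ▸ (by rw [hv]; congr 1; exact Fin.ext (by simp [h])))
    have hJ : J < M := by omega
    -- b is not an arc of the path
    have hbp : ∀ (i : ℕ) (hi : i < M), b ≠ p ⟨i, hi⟩ := by
      intro i hi beq
      rcases hbpair with ⟨hb1, hb2⟩ | ⟨hb1, hb2⟩ <;> rcases hpair i hi with ⟨h1, h2⟩ | ⟨h1, h2⟩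
      · have : M = i := hw' M i (by omega) (by omega)
          (hv.symm.trans ((hb1.trans (congrArg s beq)).trans h1.symm))
        omega
      · have e1 : M = i + 1 := hw' M (i+1) (by omega) (by omega)
          (hv.symm.trans ((hb1.trans (congrArg s beq)).trans h2.symm))
        have e2 : J = i := hw' J i hJ1 (by omega)
          (hwJ.trans ((hb2.trans (congrArg t beq)).trans h1.symm))
        apply hba
        rw [beq, ha₀]
        congr 1
        exact Fin.ext (by simp; omega)
      · have e1 : M = i + 1 := hw' M (i+1) (by omega) (by omega)
          (hv.symm.trans ((hb1.trans (congrArg t beq)).trans h2.symm))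
        have e2 : J = i := hw' J i hJ1 (by omega)
          (hwJ.trans ((hb2.trans (congrArg s beq)).trans h1.symm))
        apply hba
        rw [beq, ha₀]
        congr 1
        exact Fin.ext (by simp; omega)
      · have : M = i := hw' M i (by omega) (by omega)
          (hv.symm.trans ((hb1.trans (congrArg t beq)).trans h1.symm))
        omega
    set L := M - J with hL
    have hL1 : 1 ≤ L := by omega
    refine ⟨L, fun i => if h : (i : ℕ) < L then p ⟨J + i, by omega⟩ else b,
      fun i => if h : (i : ℕ) < L then d ⟨J + i, by omega⟩ else db, ?_, ?_, ?_⟩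
    · intro i j hij
      dsimp only at hij
      by_cases hi : (i : ℕ) < L <;> by_cases hj : (j : ℕ) < L <;>
        simp only [hi, hj, dif_pos, dif_neg, not_false_iff] at hij
      · have := hp_inj (J + i) (J + j) (by omega) (by omega) hij
        exact Fin.ext (by omega)
      · exact absurd hij.symm (hbp _ _)
      · exact absurd hij (hbp _ _)
      · have h1 := i.isLt
        have h2 := j.isLt
        exact Fin.ext (by omega)
    · intro i
      dsimp only
      by_cases h : (i : ℕ) < L <;> simp only [h, dif_pos, dif_neg, not_false_iff]
      · exact hpS _
      · exact hbS
    · intro i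
      have hval : ((i + 1 : Fin (L + 1)) : ℕ) = if (i : ℕ) = L then 0 else (i : ℕ) + 1 := by
        rw [Fin.val_add_one]
        by_cases h : i = Fin.last L
        · simp [h, Fin.last]
        · have h2 : (i : ℕ) ≠ L := fun hc => h (Fin.ext (by simpa using hc))
          simp [h, h2]
      dsimp only
      by_cases hiL : (i : ℕ) < L
      · by_cases hiL2 : ((i + 1 : Fin (L + 1)) : ℕ) < L
        · have hv2 : ((i + 1 : Fin (L + 1)) : ℕ) = (i : ℕ) + 1 := by
            rw [hval, if_neg (by omega)]
          simp only [dif_pos hiL, dif_pos hiL2]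
          rw [(hpc (J + i) (by omega)).2,
            (hpc (J + ((i + 1 : Fin (L + 1)) : ℕ)) (by omega)).1]
          congr 1
          simp only [Fin.mk.injEq]
          omega
        · have hv2 : ((i + 1 : Fin (L + 1)) : ℕ) = (i : ℕ) + 1 := by
            rw [hval, if_neg (by omega)]
          simp only [dif_pos hiL, dif_neg hiL2]
          rw [(hpc (J + i) (by omega)).2, htlb, hv]
          congr 1
          have h3 := (i + 1 : Fin (L + 1)).isLt
          simp only [Fin.mk.injEq]
          omega
      · have hiv : (i : ℕ) = L := by have := i.isLt; omega
        have hv2 : ((i + 1 : Fin (L + 1)) : ℕ) = 0 := by rw [hval, if_pos hiv]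
        simp only [dif_neg hiL, dif_pos (show ((i + 1 : Fin (L + 1)) : ℕ) < L by omega)]
        have hidx : (⟨J, hJ1⟩ : Fin (M + 1)) = ⟨J + ((i + 1 : Fin (L + 1)) : ℕ), by omega⟩ := by
          simp only [Fin.mk.injEq]
          omega
        exact hu.symm.trans (hwJ.symm.trans ((congrArg w hidx).trans
          ((hpc (J + ((i + 1 : Fin (L + 1)) : ℕ)) (by omega)).1.symm)))
  · -- u is not on the path : extend the path, contradicting maximality
    exfalso
    have hgood' : good (M + 1) := by
      refine ⟨by omega,
        fun i => if h : (i : ℕ) < M + 1 then w ⟨i, h⟩ else u,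
        fun i => if h : (i : ℕ) < M then p ⟨i, h⟩ else b,
        fun i => if h : (i : ℕ) < M then d ⟨i, h⟩ else db, ?_, ?_, ?_⟩
      · intro i j hij
        dsimp only at hij
        by_cases hi : (i : ℕ) < M + 1 <;> by_cases hj : (j : ℕ) < M + 1 <;>
          simp only [hi, hj, dif_pos, dif_neg, not_false_iff] at hij
        · exact Fin.ext (hw' _ _ _ _ hij)
        · exact absurd ⟨_, _, hij⟩ humem
        · exact absurd ⟨_, _, hij.symm⟩ humem
        · have h1 := i.isLt
          have h2 := j.isLt
          exact Fin.ext (by omega)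
      · intro i
        dsimp only
        by_cases h : (i : ℕ) < M <;> simp only [h, dif_pos, dif_neg, not_false_iff]
        · exact hpS _
        · exact hbS
      · intro i hi
        dsimp only
        by_cases h : i < M
        · simp only [dif_pos h, dif_pos (show i < M + 1 by omega),
            dif_pos (show i + 1 < M + 1 by omega)]
          exact hpc i h
        · have hiM : i = M := by omega
          simp only [dif_neg h, dif_pos (show i < M + 1 by omega),
            dif_neg (show ¬ i + 1 < M + 1 by omega)]
          refine ⟨?_, hu.symm⟩
          rw [htlb, hv]
          congr 1
          simp only [Fin.mk.injEq]
          omega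
    exact hmax (M+1) (by omega) (by have := hbound (M+1) hgood'; omega) hgood'
end

section
set_option linter.unusedSectionVars false
set_option maxHeartbeats 1000000
variable {V A : Type} [Fintype V] [Fintype A] [DecidableEq V] [DecidableEq A]

open Classical in
lemma qp_rounding (s t : A → V) (θ : V → ℤ) (c : A → ℝ) (hc : IsLatticePt c) :
    ∀ (N : ℕ) (y : A → ℝ),
      (Finset.univ.filter (fun a => ¬ ∃ z : ℤ, y a = (z : ℝ))).card ≤ N →
      (∀ a, 0 ≤ y a) → (∀ a, y a ≤ c a) → (∀ v, flowMap s t y v = (θ v : ℝ)) →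
      ∃ x : A → ℝ, IsLatticePt x ∧ (∀ a, 0 ≤ x a) ∧ (∀ a, x a ≤ c a) ∧
        (∀ v, flowMap s t x v = (θ v : ℝ)) := by
  intro N
  induction N with
  | zero =>
    intro y hcard h0 hc' hθ
    refine ⟨y, ?_, h0, hc', hθ⟩
    intro a
    by_contra h
    have hmem : a ∈ Finset.univ.filter (fun a => ¬ ∃ z : ℤ, y a = (z : ℝ)) :=
      Finset.mem_filter.2 ⟨Finset.mem_univ a, h⟩
    have := Finset.card_pos.2 ⟨a, hmem⟩
    omega
  | succ N ih =>
    intro y hcard h0 hc' hθ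
    set S := Finset.univ.filter (fun a => ¬ ∃ z : ℤ, y a = (z : ℝ)) with hS
    have hSmem : ∀ b, b ∈ S ↔ ¬ ∃ z : ℤ, y b = (z : ℝ) := by
      intro b; rw [hS, Finset.mem_filter]; simp
    by_cases hSne : S.Nonempty
    swap
    · exact ih y (by rw [Finset.not_nonempty_iff_eq_empty] at hSne
                     rw [← hS, hSne]; simp) h0 hc' hθ
    -- main improvement step
    have improve : ∃ (y' : A → ℝ) (a₀ : A), a₀ ∈ S ∧ (∀ a, 0 ≤ y' a) ∧ (∀ a, y' a ≤ c a) ∧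
        (∀ v, flowMap s t y' v = (θ v : ℝ)) ∧
        ∀ b, (¬ ∃ z : ℤ, y' b = (z : ℝ)) → ((¬ ∃ z : ℤ, y b = (z : ℝ)) ∧ b ≠ a₀) := by
      by_cases hloop : ∃ a ∈ S, s a = t a
      · -- round down a fractional loop
        obtain ⟨a, haS, hl⟩ := hloop
        refine ⟨y + Pi.single a ((⌊y a⌋ : ℝ) - y a), a, haS, ?_, ?_, ?_, ?_⟩
        · intro b
          by_cases hb : b = a
          · subst hb
            simp only [Pi.add_apply, Pi.single_eq_same]
            have : (0:ℝ) ≤ (⌊y b⌋ : ℝ) := by exact_mod_cast Int.floor_nonneg.2 (h0 b)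
            linarith
          · simp only [Pi.add_apply, Pi.single_eq_of_ne hb]
            simpa using h0 b
        · intro b
          by_cases hb : b = a
          · subst hb
            simp only [Pi.add_apply, Pi.single_eq_same]
            have := Int.floor_le (y b)
            have := hc' b
            linarith
          · simp only [Pi.add_apply, Pi.single_eq_of_ne hb]
            simpa using hc' b
        · intro v
          rw [flowMap_add, flowMap_single, hl, sub_self, add_zero]
          exact hθ v
        · intro b hb
          by_cases hbe : b = a
          · subst hbe
            exfalso
            apply hb
            refine ⟨⌊y b⌋, ?_⟩
            simp only [Pi.add_apply, Pi.single_eq_same]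
            ring
          · refine ⟨?_, hbe⟩
            simpa only [Pi.add_apply, Pi.single_eq_of_ne hbe, add_zero] using hb
      · -- all fractional arcs are non-loops : find a cycle and push flow around it
        push_neg at hloop
        have hnl : ∀ a ∈ S, s a ≠ t a := hloop
        have hdeg : ∀ a ∈ S, ∀ v : V, (v = s a ∨ v = t a) →
            ∃ b ∈ S, b ≠ a ∧ (s b = v ∨ t b = v) := by
          intro a haS v hv
          by_contra hno
          push_neg at hno
          set z : A → ℝ := fun b => if b ∈ S then 0 else y b with hz
          set w : A → ℝ := fun b => if b ∈ S then y b else 0 with hwdef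
          have hyzw : y = z + w := funext fun b => by
            by_cases hb : b ∈ S <;> simp [hz, hwdef, hb]
          have hzint : IsLatticePt z := by
            intro b
            by_cases hb : b ∈ S
            · exact ⟨0, by simp [hz, hb]⟩
            · have hyb : ∃ zz : ℤ, y b = (zz : ℝ) := by
                by_contra hcon
                exact hb ((hSmem b).2 hcon)
              obtain ⟨zz, hzz⟩ := hyb
              exact ⟨zz, by simp [hz, hb, hzz]⟩
          obtain ⟨q, hq⟩ := flowMap_int s t z hzint v
          have hsum : ∀ f : A → V, (f a = v ∨ (∀ b ∈ S, b ≠ a → f b ≠ v) ) → True := fun _ _ => trivial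
          have hwsum : ∀ f : A → V, (∀ b ∈ S, b ≠ a → f b ≠ v) →
              ∑ b, (if f b = v then w b else 0) = (if f a = v then y a else 0) := by
            intro f hf
            rw [Finset.sum_eq_single a]
            · by_cases hfa : f a = v
              · simp [hfa, hwdef, haS]
              · simp [hfa]
            · intro b _ hb
              by_cases hbS : b ∈ S
              · rw [if_neg (hf b hbS hb)]
              · have : w b = 0 := by simp [hwdef, hbS]
                rw [this]; simp
            · intro h; exact absurd (Finset.mem_univ a) h
          have hwflow : flowMap s t w v
              = (if t a = v then y a else 0) - (if s a = v then y a else 0) := by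
            simp only [flowMap]
            rw [hwsum t (fun b hb hba h => (hno b hb hba).2 h),
                hwsum s (fun b hb hba h => (hno b hb hba).1 h)]
          have hcomb := hθ v
          rw [hyzw, flowMap_add, hq, hwflow] at hcomb
          have hfa : ¬ ∃ zz : ℤ, y a = (zz : ℝ) := (hSmem a).1 haS
          rcases hv with hv | hv
          · have hta : t a ≠ v := fun h => (hnl a haS) ((h.trans hv).symm)
            rw [if_neg hta, if_pos hv.symm] at hcomb
            exact hfa ⟨q - θ v, by push_cast; linarith⟩
          · have hsa : s a ≠ v := fun h => (hnl a haS) (h.trans hv)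
            rw [if_pos hv.symm, if_neg hsa] at hcomb
            exact hfa ⟨θ v - q, by push_cast; linarith⟩
        obtain ⟨n, e, dd, hinj, heS, hcyc⟩ := qp_cycle_exists s t S hSne hnl hdeg
        have hfrac : ∀ i, ¬ ∃ z : ℤ, y (e i) = (z : ℝ) := fun i => (hSmem (e i)).1 (heS i)
        set df : Fin (n+1) → ℝ := fun i =>
          if dd i then (⌈y (e i)⌉ : ℝ) - y (e i) else y (e i) - (⌊y (e i)⌋ : ℝ) with hdf
        have hfl : ∀ i, (⌊y (e i)⌋ : ℝ) < y (e i) := fun i =>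
          lt_of_le_of_ne (Int.floor_le _) (fun h => hfrac i ⟨⌊y (e i)⌋, h.symm⟩)
        have hcl : ∀ i, y (e i) < (⌈y (e i)⌉ : ℝ) := fun i =>
          lt_of_le_of_ne (Int.le_ceil _) (fun h => hfrac i ⟨⌈y (e i)⌉, h⟩)
        have hdpos : ∀ i, 0 < df i := by
          intro i
          have h1 := hfl i
          have h2 := hcl i
          rw [hdf]
          cases hdd : dd i <;> simp only [hdd, if_true, if_false, Bool.false_eq_true] <;> linarith
        have hne : (Finset.univ : Finset (Fin (n+1))).Nonempty := ⟨0, Finset.mem_univ 0⟩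
        set δ := Finset.univ.inf' hne df with hδ
        have hδle : ∀ i, δ ≤ df i := fun i => Finset.inf'_le _ (Finset.mem_univ i)
        obtain ⟨i₀, _, hi₀⟩ := Finset.exists_mem_eq_inf' hne df
        have hδpos : 0 < δ := by rw [hδ, hi₀]; exact hdpos i₀
        set g : A → ℝ := ∑ i, Pi.single (e i) ((if dd i then 1 else -1) * δ) with hg
        have hg_at : ∀ i, g (e i) = (if dd i then 1 else -1) * δ := by
          intro i
          rw [hg, Finset.sum_apply]
          rw [Finset.sum_eq_single i]
          · simp
          · intro j _ hj
            exact Pi.single_eq_of_ne (fun h : e i = e j => hj (hinj h).symm) _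
          · intro h; exact absurd (Finset.mem_univ i) h
        have hg_not : ∀ b, (∀ i, e i ≠ b) → g b = 0 := by
          intro b hb
          rw [hg, Finset.sum_apply]
          exact Finset.sum_eq_zero fun i _ => Pi.single_eq_of_ne (fun h => hb i h.symm) _
        have hgflow : ∀ v, flowMap s t g v = 0 := by
          intro v
          rw [hg, flowMap_sum]
          have step : ∀ i, flowMap s t (Pi.single (e i) ((if dd i then 1 else -1) * δ)) v
              = (if qhd s t (e i) (dd i) = v then δ else 0)
                - (if qtl s t (e i) (dd i) = v then δ else 0) := by
            intro i
            rw [flowMap_single]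
            cases hdd : dd i <;>
              simp only [hdd, qhd, qtl, if_true, if_false, Bool.false_eq_true] <;>
              split_ifs <;> ring
          rw [Finset.sum_congr rfl (fun i _ => step i), Finset.sum_sub_distrib]
          have h1 : ∑ i, (if qhd s t (e i) (dd i) = v then δ else 0)
              = ∑ i, (if qtl s t (e i) (dd i) = v then δ else 0) := by
            rw [Finset.sum_congr rfl (fun i _ => by rw [hcyc i])]
            exact Fintype.sum_bijective (· + 1) (Equiv.addRight 1).bijective _ _ (fun i => rfl)
          rw [h1, sub_self]
        refine ⟨y + g, e i₀, heS i₀, ?_, ?_, ?_, ?_⟩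
        · intro b
          by_cases hb : ∃ i, e i = b
          · obtain ⟨i, rfl⟩ := hb
            simp only [Pi.add_apply, hg_at i]
            have := hδle i
            have h1 := hfl i
            rw [hdf] at this
            have hfl0 : (0:ℝ) ≤ (⌊y (e i)⌋ : ℝ) := by
              exact_mod_cast Int.floor_nonneg.2 (h0 (e i))
            cases hdd : dd i <;>
              simp only [hdd, if_true, if_false, Bool.false_eq_true] at this ⊢ <;>
              nlinarith [h0 (e i), hδpos]
          · push_neg at hb
            rw [Pi.add_apply, hg_not b (fun i => hb i), add_zero]
            exact h0 b
        · intro b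
          by_cases hb : ∃ i, e i = b
          · obtain ⟨i, rfl⟩ := hb
            simp only [Pi.add_apply, hg_at i]
            have := hδle i
            rw [hdf] at this
            have hceil : ((⌈y (e i)⌉ : ℤ) : ℝ) ≤ c (e i) := by
              obtain ⟨zc, hzc⟩ := hc (e i)
              rw [hzc]
              exact_mod_cast Int.ceil_le.2 (by rw [← hzc]; exact hc' (e i))
            cases hdd : dd i <;>
              simp only [hdd, if_true, if_false, Bool.false_eq_true] at this ⊢ <;>
              nlinarith [hc' (e i), hδpos]
          · push_neg at hb
            rw [Pi.add_apply, hg_not b (fun i => hb i), add_zero]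
            exact hc' b
        · intro v
          rw [flowMap_add, hgflow, add_zero]
          exact hθ v
        · intro b hb
          by_cases hbe : ∃ i, e i = b
          · obtain ⟨i, rfl⟩ := hbe
            refine ⟨hfrac i, ?_⟩
            intro hcon
            have hii : i = i₀ := hinj hcon
            subst hii
            apply hb
            rw [Pi.add_apply, hg_at i, hδ, hi₀, hdf]
            cases hdd : dd i <;> simp only [hdd, if_true, if_false, Bool.false_eq_true]
            · exact ⟨⌊y (e i)⌋, by push_cast; ring⟩
            · exact ⟨⌈y (e i)⌉, by push_cast; ring⟩
          · push_neg at hbe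
            rw [Pi.add_apply, hg_not b (fun i => hbe i), add_zero] at hb
            refine ⟨hb, ?_⟩
            intro hcon
            exact (hbe i₀) hcon.symm
    obtain ⟨y', a₀, ha₀S, h0', hc'', hθ', hdec⟩ := improve
    have hsub : (Finset.univ.filter fun b => ¬ ∃ z : ℤ, y' b = (z : ℝ)) ⊆ S.erase a₀ := by
      intro b hb
      have hfb := (Finset.mem_filter.1 hb).2
      obtain ⟨h1, h2⟩ := hdec b hfb
      exact Finset.mem_erase.2 ⟨h2, (hSmem b).2 h1⟩
    have hcard' : (Finset.univ.filter fun b => ¬ ∃ z : ℤ, y' b = (z : ℝ)).card ≤ N := by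
      have h1 := Finset.card_le_card hsub
      have h2 := Finset.card_erase_of_mem ha₀S
      have h3 := Finset.card_pos.2 hSne
      have h4 : S.card ≤ N + 1 := hcard
      omega
    exact ih y' hcard' h0' hc'' hθ'
end

section
set_option linter.unusedSectionVars false
set_option maxHeartbeats 1000000
variable {V A : Type} [Fintype V] [Fintype A] [DecidableEq V] [DecidableEq A]

lemma flowMap_smul (s t : A → V) (r : ℝ) (x : A → ℝ) (v : V) :
    flowMap s t (fun a => r * x a) v = r * flowMap s t x v := by
  have h : ∀ f : A → V, ∑ a, (if f a = v then r * x a else 0)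
      = r * ∑ a, (if f a = v then x a else 0) := by
    intro f
    rw [Finset.mul_sum]
    exact Finset.sum_congr rfl fun a _ => by split_ifs <;> simp
  simp only [flowMap, h]
  ring

lemma qp_lattice_sum {k : ℕ} (m : Fin k → (A → ℝ)) (h : ∀ i, IsLatticePt (m i)) :
    IsLatticePt (∑ i, m i) := by
  intro a
  refine ⟨∑ i, (h i a).choose, ?_⟩
  rw [Finset.sum_apply]
  push_cast
  exact Finset.sum_congr rfl fun i _ => (h i a).choose_spec

open Classical in
lemma qp_decomp (s t : A → V) (θ : V → ℤ) :
    ∀ (k : ℕ), 1 ≤ k → ∀ x : A → ℝ, (∀ a, 0 ≤ x a) → IsLatticePt x →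
      (∀ v, flowMap s t x v = (k : ℝ) * (θ v : ℝ)) →
      ∃ m : Fin k → (A → ℝ),
        (∀ i, (∀ a, 0 ≤ m i a) ∧ (∀ v, flowMap s t (m i) v = (θ v : ℝ)) ∧ IsLatticePt (m i)) ∧
        x = ∑ i, m i := by
  intro k
  induction k with
  | zero => omega
  | succ k ihk =>
    intro _ x h0 hx hflow
    by_cases hk : k = 0
    · subst hk
      refine ⟨fun _ => x, fun i => ⟨h0, fun v => by rw [hflow v]; norm_num, hx⟩, by
        rw [Fin.sum_univ_one]⟩
    · have hk1 : 1 ≤ k := by omega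
      have hkpos : (0:ℝ) < (k:ℝ) + 1 := by positivity
      have hinv1 : ((k:ℝ) + 1)⁻¹ ≤ 1 := by
        rw [inv_le_one_iff₀]
        right
        linarith
      obtain ⟨z, hzint, hz0, hzc, hzflow⟩ := qp_rounding s t θ x hx Finset.univ.card
        (fun a => ((k:ℝ) + 1)⁻¹ * x a)
        (Finset.card_filter_le _ _)
        (fun a => mul_nonneg (inv_nonneg.2 hkpos.le) (h0 a))
        (fun a => by nlinarith [h0 a, hinv1, inv_nonneg.2 hkpos.le])
        (fun v => by
          rw [flowMap_smul, hflow v]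
          push_cast
          field_simp)
      set x' : A → ℝ := fun a => x a - z a with hx'
      have hx'flow : ∀ v, flowMap s t x' v = (k : ℝ) * (θ v : ℝ) := by
        intro v
        have hxz : x = x' + z := funext fun a => by simp [hx']
        have := hflow v
        rw [hxz, flowMap_add, hzflow v] at this
        push_cast at this ⊢
        linarith
      obtain ⟨m', hm', hsum'⟩ := ihk hk1 x'
        (fun a => by have := hzc a; simp [hx']; linarith)
        (fun a => by
          obtain ⟨z1, hz1⟩ := hx a
          obtain ⟨z2, hz2⟩ := hzint a
          exact ⟨z1 - z2, by push_cast [hx', hz1, hz2]; ring⟩)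
        hx'flow
      refine ⟨Fin.cons z m', ?_, ?_⟩
      · intro i
        induction i using Fin.cases with
        | zero => simpa [Fin.cons_zero] using ⟨hz0, hzflow, hzint⟩
        | succ j => simpa [Fin.cons_succ] using hm' j
      · rw [Fin.sum_cons, ← hsum']
        funext a
        simp [hx']
end

/-- normality of the quiver polyhedron `∇(Q,θ)`: the lattice points of
`∇(Q,kθ)` form the `k`-fold Minkowski sum of the lattice points of `∇(Q,θ)`. -/
theorem stmt2 {V A : Type} [Fintype V] [Fintype A] [DecidableEq V] (s t : A → V)
    (θ : V → ℤ) (k : ℕ) (hk : 1 ≤ k) (x : A → ℝ) :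
    (x ∈ quiverPolyhedron s t (fun v => (k : ℤ) * θ v) ∧ IsLatticePt x) ↔
    ∃ m : Fin k → (A → ℝ),
      (∀ i, m i ∈ quiverPolyhedron s t θ ∧ IsLatticePt (m i)) ∧ x = ∑ i, m i := by
  classical
  constructor
  · rintro ⟨⟨h0, hflow⟩, hx⟩
    obtain ⟨m, hm, hsum⟩ := qp_decomp s t θ k hk x h0 hx (fun v => by
      rw [hflow v]; push_cast; ring)
    exact ⟨m, fun i => ⟨⟨(hm i).1, (hm i).2.1⟩, (hm i).2.2⟩, hsum⟩
  · rintro ⟨m, hm, rfl⟩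
    refine ⟨⟨?_, ?_⟩, qp_lattice_sum m (fun i => (hm i).2)⟩
    · intro a
      rw [Finset.sum_apply]
      exact Finset.sum_nonneg fun i _ => ((hm i).1).1 a
    · intro v
      rw [flowMap_sum]
      rw [Finset.sum_congr rfl (fun i _ => ((hm i).1).2 v)]
      simp [Finset.sum_const, Finset.card_univ]
end

section
/- Let Q be a quiver and θ ∈ ℤ^{Q0} a weight with ∇(Q,θ) nonempty. Suppose S ⊂ Q0 is a subset of vertices such that there is at most one arrow a ∈ Q1 with a⁺ ∈ S and a⁻ ∉ S, and at most one arrow b ∈ Q1 with b⁻ ∈ S and b⁺ ∉ S. Set θ(S) = Σ_{v ∈ S} θ(v). If such an arrow a exists and θ(S) ≥ 0, then a is contractable; if such an arrow b exists and θ(S) ≤ 0, then b is contractable. -/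
set_option linter.unusedSectionVars false

section Aux

variable {V A : Type} [Fintype A] [DecidableEq V] [DecidableEq A]

lemma sum_split (a : A) (f : A → ℝ) :
    ∑ c : A, f c = f a + ∑ b : {b : A // b ≠ a}, f b.1 := by
  rw [← Finset.add_sum_erase _ f (Finset.mem_univ a)]
  congr 1
  exact Finset.sum_subtype _ (fun x => by simp) f

lemma flow_split (s t : A → V) (a : A) (x : A → ℝ) (v : V) :
    flowMap s t x v =
      flowMap (fun b : {b : A // b ≠ a} => s b.1) (fun b => t b.1) (fun b => x b.1) v
        + (if t a = v then x a else 0) - (if s a = v then x a else 0) := by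
  unfold flowMap
  rw [sum_split a (fun c => if t c = v then x c else 0),
      sum_split a (fun c => if s c = v then x c else 0)]
  ring

variable (s t : A → V) (θ : V → ℤ) (a : A)

def cs (h : s a ≠ t a) : {b : A // b ≠ a} → {v : V // v ≠ s a} :=
  fun b => if hb : s b.1 = s a then ⟨t a, Ne.symm h⟩ else ⟨s b.1, hb⟩

def ct (h : s a ≠ t a) : {b : A // b ≠ a} → {v : V // v ≠ s a} :=
  fun b => if hb : t b.1 = s a then ⟨t a, Ne.symm h⟩ else ⟨t b.1, hb⟩

def cθ : {v : V // v ≠ s a} → ℤ :=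
  fun v => if v.1 = t a then θ (s a) + θ (t a) else θ v.1

lemma sum_proj (h : s a ≠ t a) (u : A → V) (y : {b : A // b ≠ a} → ℝ)
    (w : {v : V // v ≠ s a}) (hw : w.1 ≠ t a) :
    ∑ b : {b : A // b ≠ a},
      (if (if hb : u b.1 = s a then (⟨t a, Ne.symm h⟩ : {v : V // v ≠ s a}) else ⟨u b.1, hb⟩) = w
        then y b else 0)
      = ∑ b : {b : A // b ≠ a}, (if u b.1 = w.1 then y b else 0) := by
  apply Finset.sum_congr rfl
  intro b _
  rcases eq_or_ne (u b.1) (s a) with hb | hb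
  · have hc1 : ¬((⟨t a, Ne.symm h⟩ : {v : V // v ≠ s a}) = w) :=
      fun he => hw (congrArg Subtype.val he).symm
    have hc2 : ¬(u b.1 = w.1) := fun he => w.2 (he ▸ hb)
    rw [dif_pos hb, if_neg hc1, if_neg hc2]
  · rw [dif_neg hb]
    simp [Subtype.ext_iff]

lemma sum_proj_top (h : s a ≠ t a) (u : A → V) (y : {b : A // b ≠ a} → ℝ) :
    ∑ b : {b : A // b ≠ a},
      (if (if hb : u b.1 = s a then (⟨t a, Ne.symm h⟩ : {v : V // v ≠ s a}) else ⟨u b.1, hb⟩)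
          = (⟨t a, Ne.symm h⟩ : {v : V // v ≠ s a}) then y b else 0)
      = (∑ b : {b : A // b ≠ a}, (if u b.1 = s a then y b else 0))
        + ∑ b : {b : A // b ≠ a}, (if u b.1 = t a then y b else 0) := by
  rw [← Finset.sum_add_distrib]
  apply Finset.sum_congr rfl
  intro b _
  rcases eq_or_ne (u b.1) (s a) with hb | hb
  · rw [dif_pos hb, if_pos rfl, if_pos hb, if_neg (hb ▸ h : u b.1 ≠ t a), add_zero]
  · rw [dif_neg hb, if_neg hb, zero_add]
    simp [Subtype.ext_iff]

lemma flowA (h : s a ≠ t a) (y : {b : A // b ≠ a} → ℝ) (w : {v : V // v ≠ s a})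
    (hw : w.1 ≠ t a) :
    flowMap (cs s t a h) (ct s t a h) y w =
      flowMap (fun b : {b : A // b ≠ a} => s b.1) (fun b => t b.1) y w.1 := by
  unfold flowMap cs ct
  rw [sum_proj s t a h t y w hw, sum_proj s t a h s y w hw]

lemma flowB (h : s a ≠ t a) (y : {b : A // b ≠ a} → ℝ) :
    flowMap (cs s t a h) (ct s t a h) y ⟨t a, Ne.symm h⟩ =
      flowMap (fun b : {b : A // b ≠ a} => s b.1) (fun b => t b.1) y (s a)
      + flowMap (fun b : {b : A // b ≠ a} => s b.1) (fun b => t b.1) y (t a) := by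
  unfold flowMap cs ct
  rw [sum_proj_top s t a h t y, sum_proj_top s t a h s y]
  ring

lemma sum_ite_add (c : {b : A // b ≠ a} → Prop) [DecidablePred c]
    (x y : {b : A // b ≠ a} → ℝ) :
    ∑ b : {b : A // b ≠ a}, (if c b then x b + y b else 0)
      = (∑ b : {b : A // b ≠ a}, (if c b then x b else 0))
        + ∑ b : {b : A // b ≠ a}, (if c b then y b else 0) := by
  rw [← Finset.sum_add_distrib]
  exact Finset.sum_congr rfl fun b _ => by split <;> simp

lemma sum_ite_mul (c : {b : A // b ≠ a} → Prop) [DecidablePred c]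
    (r : ℝ) (x : {b : A // b ≠ a} → ℝ) :
    ∑ b : {b : A // b ≠ a}, (if c b then r * x b else 0)
      = r * ∑ b : {b : A // b ≠ a}, (if c b then x b else 0) := by
  rw [Finset.mul_sum]
  exact Finset.sum_congr rfl fun b _ => by split <;> simp

def flowL (v : V) : ({b : A // b ≠ a} → ℝ) →ₗ[ℝ] ℝ where
  toFun y := flowMap (fun b : {b : A // b ≠ a} => s b.1) (fun b => t b.1) y v
  map_add' x y := by
    simp only [flowMap, Pi.add_apply]
    rw [sum_ite_add, sum_ite_add]
    ring
  map_smul' r x := by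
    simp only [flowMap, Pi.smul_apply, smul_eq_mul, RingHom.id_apply]
    rw [sum_ite_mul, sum_ite_mul]
    ring

def psiL : ({b : A // b ≠ a} → ℝ) →ₗ[ℝ] (A → ℝ) where
  toFun y := fun c => if hc : c = a then flowL s t a (s a) y else y ⟨c, hc⟩
  map_add' x y := by
    funext c
    by_cases hc : c = a <;> simp [hc]
  map_smul' r x := by
    funext c
    by_cases hc : c = a <;> simp [hc]

noncomputable def psiA : ({b : A // b ≠ a} → ℝ) →ᵃ[ℝ] (A → ℝ) :=
  (psiL s t a).toAffineMap + AffineMap.const ℝ _ (fun c => if c = a then -(θ (s a) : ℝ) else 0)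

lemma psiA_apply (y : {b : A // b ≠ a} → ℝ) (c : A) :
    psiA s t θ a y c =
      if hc : c = a then
        flowMap (fun b : {b : A // b ≠ a} => s b.1) (fun b => t b.1) y (s a) - (θ (s a) : ℝ)
      else y ⟨c, hc⟩ := by
  by_cases hc : c = a <;>
    simp [psiA, psiL, flowL, hc, sub_eq_add_neg]

noncomputable def phiA : (A → ℝ) →ᵃ[ℝ] ({b : A // b ≠ a} → ℝ) :=
  (LinearMap.funLeft ℝ ℝ (fun b : {b : A // b ≠ a} => b.1)).toAffineMap

lemma phiA_apply (x : A → ℝ) : phiA a x = fun b : {b : A // b ≠ a} => x b.1 := rfl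

lemma eqOn_span {α β : Type} (f g : (α → ℝ) →ᵃ[ℝ] (β → ℝ)) (s : Set (α → ℝ))
    (h : ∀ x ∈ s, f x = g x) : ∀ x ∈ affineSpan ℝ s, f x = g x := by
  let E : AffineSubspace ℝ (α → ℝ) :=
    { carrier := {x | f x = g x}
      smul_vsub_vadd_mem' := by
        intro c p1 p2 p3 h1 h2 h3
        show f _ = g _
        rw [AffineMap.map_vadd, AffineMap.map_vadd, LinearMap.map_smul, LinearMap.map_smul,
            AffineMap.linearMap_vsub, AffineMap.linearMap_vsub]
        rw [show f p1 = g p1 from h1, show f p2 = g p2 from h2, show f p3 = g p3 from h3] }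
  have hle : affineSpan ℝ s ≤ E := affineSpan_le.mpr (fun x hx => h x hx)
  exact fun x hx => hle hx

lemma memQ (h : s a ≠ t a) {x : A → ℝ} (hx : x ∈ quiverPolyhedron s t θ) :
    (fun b : {b : A // b ≠ a} => x b.1)
      ∈ quiverPolyhedron (cs s t a h) (ct s t a h) (cθ s t θ a) := by
  refine ⟨fun b => hx.1 b.1, fun w => ?_⟩
  have hx_sa := hx.2 (s a)
  have hx_ta := hx.2 (t a)
  rw [flow_split s t a x (s a), if_neg (Ne.symm h), if_pos rfl] at hx_sa
  rw [flow_split s t a x (t a), if_pos rfl, if_neg h] at hx_ta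
  by_cases hw : w.1 = t a
  · have hw' : w = ⟨t a, Ne.symm h⟩ := Subtype.ext hw
    rw [hw', flowB s t a h]
    have hcθ : cθ s t θ a ⟨t a, Ne.symm h⟩ = θ (s a) + θ (t a) := if_pos rfl
    rw [hcθ]
    push_cast
    linarith
  · rw [flowA s t a h _ w hw]
    have hx_w := hx.2 w.1
    rw [flow_split s t a x w.1, if_neg (fun he => hw he.symm),
        if_neg (fun he => w.2 he.symm)] at hx_w
    have hcθ : cθ s t θ a w = θ w.1 := if_neg hw
    rw [hcθ]
    linarith

lemma memP (h : s a ≠ t a) {y : {b : A // b ≠ a} → ℝ}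
    (hy : y ∈ quiverPolyhedron (cs s t a h) (ct s t a h) (cθ s t θ a))
    (hky : (θ (s a) : ℝ) ≤
      flowMap (fun b : {b : A // b ≠ a} => s b.1) (fun b => t b.1) y (s a)) :
    psiA s t θ a y ∈ quiverPolyhedron s t θ := by
  have hres : (fun b : {b : A // b ≠ a} => psiA s t θ a y b.1) = y := by
    funext b
    rw [psiA_apply, dif_neg b.2]
  have hpa : psiA s t θ a y a =
      flowMap (fun b : {b : A // b ≠ a} => s b.1) (fun b => t b.1) y (s a) - (θ (s a) : ℝ) := by
    rw [psiA_apply, dif_pos rfl]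
  constructor
  · intro c
    rw [psiA_apply]
    split
    · exact sub_nonneg.2 hky
    · exact hy.1 _
  · intro v
    rw [flow_split s t a (psiA s t θ a y) v, hres, hpa]
    by_cases hv1 : v = s a
    · subst hv1
      rw [if_neg (Ne.symm h), if_pos rfl]
      ring
    by_cases hv2 : v = t a
    · subst hv2
      rw [if_pos rfl, if_neg h]
      have h2 := hy.2 ⟨t a, Ne.symm h⟩
      rw [flowB s t a h] at h2
      have hcθ : cθ s t θ a ⟨t a, Ne.symm h⟩ = θ (s a) + θ (t a) := if_pos rfl
      rw [hcθ] at h2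
      push_cast at h2
      linarith
    · rw [if_neg (fun he => hv2 he.symm), if_neg (fun he => hv1 he.symm)]
      have h2 := hy.2 ⟨v, hv1⟩
      rw [flowA s t a h y ⟨v, hv1⟩ hv2] at h2
      have hcθ : cθ s t θ a ⟨v, hv1⟩ = θ v := if_neg hv2
      rw [hcθ] at h2
      rw [h2]
      ring

lemma contractable_of_key (h : s a ≠ t a)
    (hkey : ∀ y ∈ quiverPolyhedron (cs s t a h) (ct s t a h) (cθ s t θ a),
      (θ (s a) : ℝ) ≤ flowMap (fun b : {b : A // b ≠ a} => s b.1) (fun b => t b.1) y (s a)) :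
    Contractable s t θ a h := by
  show IntegralAffinelyEquivalent (quiverPolyhedron s t θ)
      (quiverPolyhedron (cs s t a h) (ct s t a h) (cθ s t θ a))
  have hmemQ : ∀ x ∈ quiverPolyhedron s t θ,
      phiA a x ∈ quiverPolyhedron (cs s t a h) (ct s t a h) (cθ s t θ a) :=
    fun x hx => memQ s t θ a h hx
  have hmemP : ∀ y ∈ quiverPolyhedron (cs s t a h) (ct s t a h) (cθ s t θ a),
      psiA s t θ a y ∈ quiverPolyhedron s t θ :=
    fun y hy => memP s t θ a h hy (hkey y hy)
  have hsect : ∀ y, phiA a (psiA s t θ a y) = y := by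
    intro y
    funext b
    show psiA s t θ a y b.1 = y b
    rw [psiA_apply, dif_neg b.2]
  have hretr : ∀ x ∈ quiverPolyhedron s t θ, psiA s t θ a (phiA a x) = x := by
    intro x hx
    funext c
    show psiA s t θ a (fun b : {b : A // b ≠ a} => x b.1) c = x c
    rw [psiA_apply]
    split
    · next hc =>
      subst hc
      have h2 := hx.2 (s c)
      rw [flow_split s t c x (s c), if_neg (Ne.symm h), if_pos rfl] at h2
      linarith
    · rfl
  have himg : phiA a '' quiverPolyhedron s t θ
      = quiverPolyhedron (cs s t a h) (ct s t a h) (cθ s t θ a) := by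
    ext y
    constructor
    · rintro ⟨x, hx, rfl⟩
      exact hmemQ x hx
    · intro hy
      exact ⟨psiA s t θ a y, hmemP y hy, hsect y⟩
  have hspan : phiA a '' (affineSpan ℝ (quiverPolyhedron s t θ) : Set _)
      = (affineSpan ℝ (quiverPolyhedron (cs s t a h) (ct s t a h) (cθ s t θ a)) : Set _) := by
    rw [← AffineSubspace.coe_map, AffineSubspace.map_span, himg]
  refine ⟨phiA a, psiA s t θ a, ?_, fun y _ => hsect y, hspan, ?_, himg⟩
  · intro x hx
    exact eqOn_span ((psiA s t θ a).comp (phiA a)) (AffineMap.id ℝ _)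
      (quiverPolyhedron s t θ) (fun z hz => hretr z hz) x hx
  · ext y
    constructor
    · rintro ⟨x, ⟨hx1, hx2⟩, rfl⟩
      refine ⟨hspan ▸ Set.mem_image_of_mem _ hx1, fun b => hx2 b.1⟩
    · rintro ⟨hy1, hy2⟩
      have hle : affineSpan ℝ (quiverPolyhedron (cs s t a h) (ct s t a h) (cθ s t θ a))
          ≤ (affineSpan ℝ (quiverPolyhedron s t θ)).comap (psiA s t θ a) := by
        apply affineSpan_le.mpr
        intro z hz
        exact AffineSubspace.mem_comap.mpr (mem_affineSpan ℝ (hmemP z hz))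
      refine ⟨psiA s t θ a y, ⟨AffineSubspace.mem_comap.mp (hle hy1), ?_⟩, hsect y⟩
      intro c
      rw [psiA_apply]
      split
      · choose z hz using hy2
        refine ⟨(∑ b : {b : A // b ≠ a}, (if t b.1 = s a then z b else 0))
              - (∑ b : {b : A // b ≠ a}, (if s b.1 = s a then z b else 0)) - θ (s a), ?_⟩
        simp only [flowMap, hz]
        push_cast [apply_ite (fun n : ℤ => (n : ℝ))]
        ring
      · exact hy2 _

lemma sum_flow_S (y : {b : A // b ≠ a} → ℝ) (S : Finset V) :
    ∑ v ∈ S, flowMap (fun b : {b : A // b ≠ a} => s b.1) (fun b => t b.1) y v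
      = ∑ b : {b : A // b ≠ a},
          ((if t b.1 ∈ S then y b else 0) - (if s b.1 ∈ S then y b else 0)) := by
  have e : ∀ u : {b : A // b ≠ a} → V,
      ∑ v ∈ S, ∑ b : {b : A // b ≠ a}, (if u b = v then y b else 0)
        = ∑ b : {b : A // b ≠ a}, (if u b ∈ S then y b else 0) := by
    intro u
    rw [Finset.sum_comm]
    exact Finset.sum_congr rfl fun b _ => Finset.sum_ite_eq S (u b) (fun _ => y b)
  simp only [flowMap]
  rw [Finset.sum_sub_distrib, e (fun b => t b.1), e (fun b => s b.1), ← Finset.sum_sub_distrib]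

lemma key_in (h : s a ≠ t a) (S : Finset V) (hta : t a ∈ S) (hsa : s a ∉ S)
    (hθ : 0 ≤ ∑ v ∈ S, θ v)
    (hin : ∀ a' : A, t a' ∈ S → s a' ∉ S → a' = a)
    (y : {b : A // b ≠ a} → ℝ)
    (hy : y ∈ quiverPolyhedron (cs s t a h) (ct s t a h) (cθ s t θ a)) :
    (θ (s a) : ℝ) ≤ flowMap (fun b : {b : A // b ≠ a} => s b.1) (fun b => t b.1) y (s a) := by
  have hA : ∀ v ∈ S, v ≠ t a →
      flowMap (fun b : {b : A // b ≠ a} => s b.1) (fun b => t b.1) y v = (θ v : ℝ) := by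
    intro v hv hvta
    have hvsa : v ≠ s a := fun he => hsa (he ▸ hv)
    have h2 := hy.2 ⟨v, hvsa⟩
    rw [flowA s t a h y ⟨v, hvsa⟩ hvta] at h2
    have hcθ : cθ s t θ a ⟨v, hvsa⟩ = θ v := if_neg hvta
    rw [hcθ] at h2
    exact h2
  have hB : flowMap (fun b : {b : A // b ≠ a} => s b.1) (fun b => t b.1) y (s a)
      + flowMap (fun b : {b : A // b ≠ a} => s b.1) (fun b => t b.1) y (t a)
      = (θ (s a) : ℝ) + (θ (t a) : ℝ) := by
    have h2 := hy.2 ⟨t a, Ne.symm h⟩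
    rw [flowB s t a h y] at h2
    have hcθ : cθ s t θ a ⟨t a, Ne.symm h⟩ = θ (s a) + θ (t a) := if_pos rfl
    rw [hcθ] at h2
    push_cast at h2
    exact h2
  have h3 : ∑ v ∈ S, flowMap (fun b : {b : A // b ≠ a} => s b.1) (fun b => t b.1) y v
      = flowMap (fun b : {b : A // b ≠ a} => s b.1) (fun b => t b.1) y (t a)
        + ∑ v ∈ S.erase (t a), (θ v : ℝ) := by
    rw [← Finset.add_sum_erase S _ hta]
    congr 1
    exact Finset.sum_congr rfl fun v hv =>
      hA v (Finset.mem_of_mem_erase hv) (Finset.ne_of_mem_erase hv)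
  have h4 : ∑ v ∈ S, flowMap (fun b : {b : A // b ≠ a} => s b.1) (fun b => t b.1) y v ≤ 0 := by
    rw [sum_flow_S s t a y S]
    apply Finset.sum_nonpos
    intro b _
    by_cases hb : t b.1 ∈ S
    · have hsb : s b.1 ∈ S := by
        by_contra hsb
        exact b.2 (hin b.1 hb hsb)
      rw [if_pos hb, if_pos hsb]
      simp
    · rw [if_neg hb]
      split
      · linarith [hy.1 b]
      · simp
  have h5 : ∑ v ∈ S.erase (t a), (θ v : ℝ) = ((∑ v ∈ S, θ v : ℤ) : ℝ) - (θ (t a) : ℝ) := by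
    push_cast
    rw [← Finset.add_sum_erase S (fun v => (θ v : ℝ)) hta]
    ring
  have hθR : (0 : ℝ) ≤ ((∑ v ∈ S, θ v : ℤ) : ℝ) := by exact_mod_cast hθ
  linarith

lemma key_out (h : s a ≠ t a) (S : Finset V) (hsa : s a ∈ S) (hta : t a ∉ S)
    (hθ : (∑ v ∈ S, θ v) ≤ 0)
    (hout : ∀ b' : A, s b' ∈ S → t b' ∉ S → b' = a)
    (y : {b : A // b ≠ a} → ℝ)
    (hy : y ∈ quiverPolyhedron (cs s t a h) (ct s t a h) (cθ s t θ a)) :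
    (θ (s a) : ℝ) ≤ flowMap (fun b : {b : A // b ≠ a} => s b.1) (fun b => t b.1) y (s a) := by
  have hA : ∀ v ∈ S, v ≠ s a →
      flowMap (fun b : {b : A // b ≠ a} => s b.1) (fun b => t b.1) y v = (θ v : ℝ) := by
    intro v hv hvsa
    have hvta : v ≠ t a := fun he => hta (he ▸ hv)
    have h2 := hy.2 ⟨v, hvsa⟩
    rw [flowA s t a h y ⟨v, hvsa⟩ hvta] at h2
    have hcθ : cθ s t θ a ⟨v, hvsa⟩ = θ v := if_neg hvta
    rw [hcθ] at h2
    exact h2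
  have h3 : ∑ v ∈ S, flowMap (fun b : {b : A // b ≠ a} => s b.1) (fun b => t b.1) y v
      = flowMap (fun b : {b : A // b ≠ a} => s b.1) (fun b => t b.1) y (s a)
        + ∑ v ∈ S.erase (s a), (θ v : ℝ) := by
    rw [← Finset.add_sum_erase S _ hsa]
    congr 1
    exact Finset.sum_congr rfl fun v hv =>
      hA v (Finset.mem_of_mem_erase hv) (Finset.ne_of_mem_erase hv)
  have h4 : 0 ≤ ∑ v ∈ S, flowMap (fun b : {b : A // b ≠ a} => s b.1) (fun b => t b.1) y v := by
    rw [sum_flow_S s t a y S]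
    apply Finset.sum_nonneg
    intro b _
    by_cases hb : s b.1 ∈ S
    · have htb : t b.1 ∈ S := by
        by_contra htb
        exact b.2 (hout b.1 hb htb)
      rw [if_pos hb, if_pos htb]
      simp
    · rw [if_neg hb]
      split
      · linarith [hy.1 b]
      · simp
  have h5 : ∑ v ∈ S.erase (s a), (θ v : ℝ) = ((∑ v ∈ S, θ v : ℤ) : ℝ) - (θ (s a) : ℝ) := by
    push_cast
    rw [← Finset.add_sum_erase S (fun v => (θ v : ℝ)) hsa]
    ring
  have hθR : ((∑ v ∈ S, θ v : ℤ) : ℝ) ≤ 0 := by exact_mod_cast hθ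
  linarith

end Aux

/-- if a subset `S` of vertices has at most one in-arrow and at most one
out-arrow, then the in-arrow is contractable when `θ(S) ≥ 0` and the out-arrow is
contractable when `θ(S) ≤ 0`. -/
theorem stmt6 {V A : Type} [Fintype V] [Fintype A] [DecidableEq V] [DecidableEq A]
    (s t : A → V) (θ : V → ℤ) (hne : (quiverPolyhedron s t θ).Nonempty)
    (S : Finset V)
    (hin : ∀ a a' : A, t a ∈ S → s a ∉ S → t a' ∈ S → s a' ∉ S → a = a')
    (hout : ∀ b b' : A, s b ∈ S → t b ∉ S → s b' ∈ S → t b' ∉ S → b = b') :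
    (∀ (a : A) (hta : t a ∈ S) (hsa : s a ∉ S), 0 ≤ ∑ v ∈ S, θ v →
      Contractable s t θ a (fun he => hsa (by rw [he]; exact hta))) ∧
    (∀ (b : A) (hsb : s b ∈ S) (htb : t b ∉ S), (∑ v ∈ S, θ v) ≤ 0 →
      Contractable s t θ b (fun he => htb (by rw [← he]; exact hsb))) := by
  constructor
  · intro a hta hsa hθ
    exact contractable_of_key s t θ a _
      (fun y hy => key_in s t θ a _ S hta hsa hθ (fun a' h1 h2 => hin a' a h1 h2 hta hsa) y hy)
  · intro b hsb htb hθ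
    exact contractable_of_key s t θ b _
      (fun y hy => key_out s t θ b _ S hsb htb hθ (fun b' h1 h2 => hout b' b h1 h2 hsb htb) y hy)
end
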